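/- Let B be a box with side lengths x, y, z each at least l ≥ 1, and suppose every box in a family U has all side lengths at least l and total surface area at most s. Then the number of boxes of U whose closed boundary shares a 2-dimensional face region with a face of B is at most s/l², and the number of boxes of U adjacent to B only along an edge of B is at most 4(x+y+z)/l + 12; consequently B is adjacent to at most 3s/l² + 12 boxes of U. -/

import Mathlib

/-- An axis-aligned box in `ℤ³`, given by lower and upper corners. -/
structure IntBox where
  lo : Fin 3 → ℤ
  hi : Fin 3 → ℤ
  lo_lt_hi : ∀ i, lo i < hi i

/-- Side length of a box in dimension `i`. -/
def IntBox.side (b : IntBox) (i : Fin 3) : ℤ := b.hi i - b.lo i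

/-- Total surface area of a box. -/
def IntBox.surface (b : IntBox) : ℤ :=
  2 * b.side 0 * b.side 1 + 2 * b.side 1 * b.side 2 + 2 * b.side 0 * b.side 2

/-- Two boxes have disjoint interiors. -/
def IntBox.IntDisjoint (b b' : IntBox) : Prop :=
  ∃ i, b.hi i ≤ b'.lo i ∨ b'.hi i ≤ b.lo i

/-- Two boxes are adjacent: face-to-face contact with positive area. -/
def IntBox.Adj (b b' : IntBox) : Prop :=
  ∃ i, (b.hi i = b'.lo i ∨ b'.hi i = b.lo i) ∧
    ∀ j, j ≠ i → max (b.lo j) (b'.lo j) < min (b.hi j) (b'.hi j)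

/-- `b'` has a face totally adjacent to (contained in) a face of `b`. -/
def IntBox.FaceAdj (b b' : IntBox) : Prop :=
  ∃ i, (b.hi i = b'.lo i ∨ b'.hi i = b.lo i) ∧
    ∀ j, j ≠ i → b.lo j ≤ b'.lo j ∧ b'.hi j ≤ b.hi j

/-! Think of `p ∈ ℤ³` as the unit cell `[p, p + 1)`, so that interior-disjoint boxes share no
cell. Around `B` lies a shell one cell thick, made of six face layers (of total size the surface
area of `B`), twelve edge rows (of total length `4(x + y + z)`) and eight corner cells. A box
touching a face of `B` with a whole face of its own covers at least `l²` cells of a face layer;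
any other neighbour either covers at least `l` cells of an edge row or owns a corner cell.
Counting cells gives the first two bounds, and `2l(x + y + z) ≤ s` turns `4(x + y + z)/l` into
at most `2s/l²`. -/

theorem Finset.card_mul_le_card_of_pairwiseDisjoint {ι α : Type*} [DecidableEq α]
    {s : Finset ι} {t : ι → Finset α} {T : Finset α} {n : ℕ}
    (hd : (s : Set ι).PairwiseDisjoint t) (hsub : ∀ i ∈ s, t i ⊆ T)
    (hn : ∀ i ∈ s, n ≤ (t i).card) : s.card * n ≤ T.card :=
  calc s.card * n ≤ ∑ i ∈ s, (t i).card := by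
        simpa [mul_comm] using Finset.card_nsmul_le_sum s (fun i => (t i).card) n hn
    _ = (s.biUnion t).card := (Finset.card_biUnion hd).symm
    _ ≤ T.card := Finset.card_le_card (Finset.biUnion_subset.mpr hsub)

namespace IntBox

noncomputable section

def span (b : IntBox) (m : Fin 3) : Finset ℤ := Finset.Ico (b.lo m) (b.hi m)

def cells (b : IntBox) : Finset (Fin 3 → ℤ) := Fintype.piFinset b.span

def rim (B : IntBox) (m : Fin 3) : Finset ℤ := {B.lo m - 1, B.hi m}

/-- For `S = {i}ᶜ` these are the two face layers of the shell normal to axis `i`, for `S = {k}`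
the four edge rows parallel to axis `k`, and for `S = ∅` the eight corner cells. -/
def shell (B : IntBox) (S : Finset (Fin 3)) : Finset (Fin 3 → ℤ) :=
  Fintype.piFinset fun m => if m ∈ S then B.span m else B.rim m

def FitsAlong (B b : IntBox) (S : Finset (Fin 3)) : Prop :=
  (∀ m ∈ S, b.span m ⊆ B.span m) ∧ ∀ m ∉ S, ¬ Disjoint (b.span m) (B.rim m)

def insideCoords (B b : IntBox) : Finset (Fin 3) :=
  Finset.univ.filter fun m => b.span m ⊆ B.span m

def IsPacking (l : ℤ) (V : Finset IntBox) : Prop :=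
  (V : Set IntBox).Pairwise IntDisjoint ∧ ∀ b ∈ V, ∀ m, l ≤ b.side m

end

lemma IsPacking.mono {l : ℤ} {V W : Finset IntBox} (hV : IsPacking l V) (hWV : W ⊆ V) :
    IsPacking l W :=
  ⟨hV.1.mono (Finset.coe_subset.mpr hWV), fun b hb => hV.2 b (hWV hb)⟩

lemma mem_span {b : IntBox} {m : Fin 3} {a : ℤ} :
    a ∈ b.span m ↔ b.lo m ≤ a ∧ a < b.hi m :=
  Finset.mem_Ico

lemma card_span (b : IntBox) (m : Fin 3) : ((b.span m).card : ℤ) = b.side m := by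
  rw [span, Int.card_Ico, Int.toNat_of_nonneg (by have := b.lo_lt_hi m; omega)]
  rfl

lemma span_subset_span_iff {B b : IntBox} {m : Fin 3} :
    b.span m ⊆ B.span m ↔ B.lo m ≤ b.lo m ∧ b.hi m ≤ B.hi m :=
  Finset.Ico_subset_Ico_iff (b.lo_lt_hi m)

lemma not_disjoint_rim_iff {B b : IntBox} {m : Fin 3} :
    ¬ Disjoint (b.span m) (B.rim m) ↔ B.lo m - 1 ∈ b.span m ∨ B.hi m ∈ b.span m := by
  simp only [rim, Finset.disjoint_insert_right, Finset.disjoint_singleton_right, not_and_or,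
    not_not]

lemma IntDisjoint.disjoint_cells {b b' : IntBox} (h : b.IntDisjoint b') :
    Disjoint b.cells b'.cells := by
  obtain ⟨m, hm⟩ := h
  refine Finset.disjoint_left.mpr fun p hp hp' => ?_
  have := mem_span.mp (Fintype.mem_piFinset.mp hp m)
  have := mem_span.mp (Fintype.mem_piFinset.mp hp' m)
  omega

lemma card_shell (B : IntBox) (S : Finset (Fin 3)) :
    ((B.shell S).card : ℤ) = ∏ m, if m ∈ S then B.side m else 2 := by
  rw [shell, Fintype.card_piFinset, Nat.cast_prod]
  refine Finset.prod_congr rfl fun m _ => ?_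
  split_ifs
  · exact card_span B m
  · rw [rim, Finset.card_pair (by have := B.lo_lt_hi m; omega)]
    rfl

lemma sum_card_shell_compl_singleton (B : IntBox) :
    ((∑ i, (B.shell {i}ᶜ).card : ℕ) : ℤ) = B.surface := by
  simp only [Fin.sum_univ_three, Nat.cast_add, card_shell, Fin.prod_univ_three, Finset.mem_compl,
    Finset.mem_singleton, ite_not, ↓reduceIte, Fin.reduceEq, one_ne_zero, zero_ne_one, surface]
  ring

lemma sum_card_shell_singleton (B : IntBox) :
    ((∑ k, (B.shell {k}).card : ℕ) : ℤ) = 4 * (B.side 0 + B.side 1 + B.side 2) := by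
  simp only [Fin.sum_univ_three, Nat.cast_add, card_shell, Fin.prod_univ_three,
    Finset.mem_singleton, ↓reduceIte, Fin.reduceEq, one_ne_zero, zero_ne_one]
  ring

lemma card_shell_empty (B : IntBox) : (B.shell ∅).card = 8 := by
  have h := card_shell B ∅
  norm_num at h
  exact_mod_cast h

lemma FitsAlong.pow_card_le_card_inter_shell {B b : IntBox} {S : Finset (Fin 3)} {n : ℕ}
    (hfit : B.FitsAlong b S) (hside : ∀ m, (n : ℤ) ≤ b.side m) :
    n ^ S.card ≤ (b.cells ∩ B.shell S).card := by
  rw [cells, shell, ← Fintype.piFinset_inter, Fintype.card_piFinset, ← Finset.prod_const,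
    ← Finset.univ_inter S, ← Finset.prod_ite_mem]
  refine Finset.prod_le_prod' fun m _ => ?_
  by_cases hm : m ∈ S <;> simp only [hm, if_true, if_false, Finset.mem_inter, Finset.mem_univ,
    true_and]
  · rw [Finset.inter_eq_left.mpr (hfit.1 m hm)]
    exact_mod_cast (hside m).trans (card_span b m).ge
  · exact (Finset.not_disjoint_iff_nonempty_inter.mp (hfit.2 m hm)).card_pos

lemma card_mul_pow_le_sum_card_shell {ι : Type*} [Fintype ι] (B : IntBox)
    (S : ι → Finset (Fin 3)) {k n : ℕ} (hS : ∀ i, (S i).card = k) {V : Finset IntBox}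
    (hV : IsPacking n V) (hfit : ∀ b ∈ V, ∃ i, B.FitsAlong b (S i)) :
    V.card * n ^ k ≤ ∑ i, (B.shell (S i)).card := by
  classical
  set T := Finset.univ.biUnion fun i => B.shell (S i)
  calc V.card * n ^ k ≤ T.card := by
        refine Finset.card_mul_le_card_of_pairwiseDisjoint (t := fun b => b.cells ∩ T)
          (fun b hb b' hb' hne => ?_) (fun b _ => Finset.inter_subset_right) fun b hb => ?_
        · exact (hV.1 hb hb' hne).disjoint_cells.mono Finset.inter_subset_left
            Finset.inter_subset_left
        · obtain ⟨i, hi⟩ := hfit b hb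
          calc n ^ k = n ^ (S i).card := by rw [hS]
            _ ≤ (b.cells ∩ B.shell (S i)).card := hi.pow_card_le_card_inter_shell (hV.2 b hb)
            _ ≤ (b.cells ∩ T).card := Finset.card_le_card <| Finset.inter_subset_inter_left <|
                Finset.subset_biUnion_of_mem (fun i => B.shell (S i)) (Finset.mem_univ i)
    _ ≤ ∑ i, (B.shell (S i)).card := Finset.card_biUnion_le

lemma FaceAdj.exists_fitsAlong_compl_singleton {B b : IntBox} (h : B.FaceAdj b) :
    ∃ i, B.FitsAlong b {i}ᶜ := by
  obtain ⟨i, hcontact, hinside⟩ := h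
  refine ⟨i, fun m hm => span_subset_span_iff.mpr (hinside m (by simpa using hm)),
    fun m hm => ?_⟩
  obtain rfl : m = i := by simpa using hm
  rw [not_disjoint_rim_iff, mem_span, mem_span]
  have := b.lo_lt_hi m
  omega

lemma Adj.fitsAlong_insideCoords {B b : IntBox} (h : B.Adj b) :
    B.FitsAlong b (B.insideCoords b) := by
  refine ⟨fun m hm => (Finset.mem_filter.mp hm).2, fun m hm => ?_⟩
  obtain ⟨i, hcontact, hoverlap⟩ := h
  have hout : ¬ (B.lo m ≤ b.lo m ∧ b.hi m ≤ B.hi m) := by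
    simpa [insideCoords, span_subset_span_iff] using hm
  rw [not_disjoint_rim_iff, mem_span, mem_span]
  have := b.lo_lt_hi m
  by_cases hmi : m = i
  · subst hmi
    omega
  · have := hoverlap m hmi
    simp only [max_lt_iff, lt_min_iff] at this
    omega

lemma card_insideCoords_le_one {B b : IntBox} (h : B.Adj b) (hface : ¬ B.FaceAdj b) :
    (B.insideCoords b).card ≤ 1 := by
  obtain ⟨i, hcontact, -⟩ := h
  have hsub : B.insideCoords b ⊆ {i}ᶜ := fun m hm => by
    rw [Finset.mem_compl, Finset.mem_singleton]
    rintro rfl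
    have := span_subset_span_iff.mp (Finset.mem_filter.mp hm).2
    have := b.lo_lt_hi m
    omega
  by_contra! hcard
  have heq := Finset.eq_of_subset_of_card_le hsub (by simp [Finset.card_compl]; omega)
  refine hface ⟨i, hcontact, fun j hj => span_subset_span_iff.mp ?_⟩
  have hj : j ∈ B.insideCoords b := heq ▸ Finset.mem_compl.mpr (by simpa using hj)
  exact (Finset.mem_filter.mp hj).2

lemma Adj.fitsAlong_empty_or_singleton {B b : IntBox} (h : B.Adj b) (hface : ¬ B.FaceAdj b) :
    B.FitsAlong b ∅ ∨ ∃ k, B.FitsAlong b {k} := by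
  obtain ⟨k, hk⟩ :=
    Finset.card_le_one_iff_subset_singleton.mp (card_insideCoords_le_one h hface)
  rcases Finset.subset_singleton_iff.mp hk with hS | hS
  · exact Or.inl (hS ▸ h.fitsAlong_insideCoords)
  · exact Or.inr ⟨k, hS ▸ h.fitsAlong_insideCoords⟩

lemma card_le_surface_div_sq (B : IntBox) {V : Finset IntBox} {n : ℕ} (hn : 0 < n)
    (hV : IsPacking n V) (hface : ∀ b ∈ V, B.FaceAdj b) :
    (V.card : ℝ) ≤ B.surface / (n : ℝ) ^ 2 := by
  rw [le_div_iff₀ (by positivity), ← sum_card_shell_compl_singleton]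
  exact_mod_cast card_mul_pow_le_sum_card_shell B (fun i => {i}ᶜ)
    (fun i => by simp [Finset.card_compl]) hV
    fun b hb => (hface b hb).exists_fitsAlong_compl_singleton

lemma card_le_of_adj_not_faceAdj (B : IntBox) {V : Finset IntBox} {n : ℕ} (hn : 0 < n)
    (hV : IsPacking n V) (hadj : ∀ b ∈ V, B.Adj b ∧ ¬ B.FaceAdj b) :
    (V.card : ℝ) ≤ 4 * ((B.side 0 : ℝ) + B.side 1 + B.side 2) / n + 8 := by
  classical
  set corner := V.filter (B.FitsAlong · ∅)
  set edge := V.filter (¬ B.FitsAlong · ∅)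
  have hcorner : corner.card ≤ 8 := by
    simpa [card_shell_empty] using card_mul_pow_le_sum_card_shell B (fun _ : Unit => ∅)
      (fun _ => rfl) (hV.mono (Finset.filter_subset _ _))
      fun b hb => ⟨(), (Finset.mem_filter.mp hb).2⟩
  have hedge : (edge.card * n : ℤ) ≤ 4 * (B.side 0 + B.side 1 + B.side 2) := by
    rw [← sum_card_shell_singleton, ← pow_one (n : ℤ)]
    exact_mod_cast card_mul_pow_le_sum_card_shell B (fun k => {k}) (k := 1)
      (fun _ => Finset.card_singleton _) (hV.mono (Finset.filter_subset _ _)) fun b hb => by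
        obtain ⟨hbV, hb⟩ := Finset.mem_filter.mp hb
        exact ((hadj b hbV).1.fitsAlong_empty_or_singleton (hadj b hbV).2).resolve_left hb
  have hn' : (0 : ℝ) < n := by exact_mod_cast hn
  rw [← Finset.card_filter_add_card_filter_not (B.FitsAlong · ∅), div_add' _ _ _ hn'.ne',
    le_div_iff₀ hn']
  have : (corner.card : ℝ) ≤ 8 := by exact_mod_cast hcorner
  have : (edge.card * n : ℝ) ≤ 4 * (B.side 0 + B.side 1 + B.side 2) := by exact_mod_cast hedge
  push_cast
  nlinarith

lemma four_mul_sum_side_div_le (B : IntBox) {l : ℝ} (hl : 0 < l) (hside : ∀ i, l ≤ B.side i) :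
    4 * ((B.side 0 : ℝ) + B.side 1 + B.side 2) / l ≤ 2 * B.surface / l ^ 2 := by
  have hpos : ∀ i, (0 : ℝ) ≤ B.side i := fun i => hl.le.trans (hside i)
  rw [div_le_div_iff₀ hl (by positivity)]
  simp only [surface, Int.cast_add, Int.cast_mul, Int.cast_ofNat]
  nlinarith [mul_le_mul_of_nonneg_right (hside 0) (hpos 1),
    mul_le_mul_of_nonneg_right (hside 1) (hpos 2), mul_le_mul_of_nonneg_right (hside 2) (hpos 0)]

end IntBox
theorem neighbour_count_bound_general (l s : ℤ) (hl : 1 ≤ l)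
    (U : Finset IntBox) (B : IntBox)
    (hdisj : ∀ b ∈ U, ∀ b' ∈ U, b ≠ b' → b.IntDisjoint b')
    (hUl : ∀ b ∈ U, ∀ i, l ≤ b.side i)
    (hBl : ∀ i, l ≤ B.side i)
    (hBs : B.surface ≤ s)
    (x y z : ℤ) (hx : x = B.side 0) (hy : y = B.side 1) (hz : z = B.side 2)
    [DecidablePred (B.FaceAdj ·)] [DecidablePred (B.Adj ·)] :
    ((U.filter (fun b => B.FaceAdj b)).card : ℝ) ≤ (s : ℝ) / (l : ℝ) ^ 2 ∧
    ((U.filter (fun b => B.Adj b ∧ ¬ B.FaceAdj b)).card : ℝ)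
      ≤ 4 * ((x : ℝ) + y + z) / l + 12 ∧
    ((U.filter (fun b => B.Adj b)).card : ℝ) ≤ 3 * (s : ℝ) / (l : ℝ) ^ 2 + 12 := by
  lift l to ℕ using (by omega)
  have hU : IntBox.IsPacking l U := ⟨fun b hb b' hb' => hdisj b hb b' hb', hUl⟩
  have hl0 : 0 < l := by omega
  have hF := B.card_le_surface_div_sq hl0 (hU.mono (Finset.filter_subset _ _))
    fun b hb => (Finset.mem_filter.mp hb).2
  have hE := B.card_le_of_adj_not_faceAdj hl0 (hU.mono (Finset.filter_subset _ _))
    fun b hb => (Finset.mem_filter.mp hb).2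
  have hsides := B.four_mul_sum_side_div_le (l := l) (by positivity) (by exact_mod_cast hBl)
  have hs : (B.surface : ℝ) / (l : ℝ) ^ 2 ≤ s / (l : ℝ) ^ 2 := by gcongr
  have hs' : 2 * (B.surface : ℝ) / (l : ℝ) ^ 2 ≤ 2 * s / (l : ℝ) ^ 2 := by gcongr
  have hsplit : (U.filter fun b => B.Adj b).card ≤ (U.filter fun b => B.FaceAdj b).card +
      (U.filter fun b => B.Adj b ∧ ¬ B.FaceAdj b).card := by
    classical
    refine (Finset.card_le_card fun b hb => ?_).trans (Finset.card_union_le _ _)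
    by_cases hb' : B.FaceAdj b <;> simp_all
  have hA := (Nat.cast_le (α := ℝ)).mpr hsplit
  subst hx hy hz
  push_cast at hA ⊢
  refine ⟨hF.trans hs, by linarith, ?_⟩
  rw [show 3 * (s : ℝ) / (l : ℝ) ^ 2 = s / (l : ℝ) ^ 2 + 2 * s / (l : ℝ) ^ 2 by ring]
  linarith

theorem neighbour_count_bound (l s : ℤ) (hl : 1 ≤ l) (hs : 0 < s)
    (U : Finset IntBox) (B : IntBox) (hBU : B ∉ U)
    (hdisj : ∀ b ∈ U, ∀ b' ∈ U, b ≠ b' → b.IntDisjoint b')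
    (hdisjB : ∀ b ∈ U, B.IntDisjoint b)
    (hUl : ∀ b ∈ U, ∀ i, l ≤ b.side i)
    (hUs : ∀ b ∈ U, b.surface ≤ s)
    (hBl : ∀ i, l ≤ B.side i)
    (hBs : B.surface ≤ s)
    (x y z : ℤ) (hx : x = B.side 0) (hy : y = B.side 1) (hz : z = B.side 2)
    [DecidablePred (B.FaceAdj ·)] [DecidablePred (B.Adj ·)] :
    ((U.filter (fun b => B.FaceAdj b)).card : ℝ) ≤ (s : ℝ) / (l : ℝ) ^ 2 ∧
    ((U.filter (fun b => B.Adj b ∧ ¬ B.FaceAdj b)).card : ℝ)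
      ≤ 4 * ((x : ℝ) + y + z) / l + 12 ∧
    ((U.filter (fun b => B.Adj b)).card : ℝ) ≤ 3 * (s : ℝ) / (l : ℝ) ^ 2 + 12 :=
  neighbour_count_bound_general l s hl U B hdisj hUl hBl hBs x y z hx hy hz
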